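/- Let B be a real p×q matrix with p ≥ q ≥ 1 and n ≥ 1. Suppose x ∈ ℝ^p and y ∈ ℝ^q are not both zero and λ ∈ ℝ with λ ≠ 0 is such that C · v = λ · v, where v is the vector indexed by Fin p ⊕ (Fin n × Fin q) with v(inl i) = x i and v(inr (k,j)) = y j for all k. Then n − 1 − λ is an eigenvalue of C, i.e., there is a nonzero vector u with C · u = (n − 1 − λ) · u. -/

import Mathlib

/-! Writing the eigen-equation of `C` at `v = (x, y, …, y)` blockwise gives `n • B y = λ • x` and
`Bᵀ x + (n - 1) • y = λ • y`. If `x ≠ 0`, these two equations say exactly that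
`(λ x, μ y, …, μ y)` with `μ = n - 1 - λ` is a nonzero `μ`-eigenvector of the same shape.
If `x = 0`, then `y ≠ 0`, so `B y = 0` and `λ = n - 1`, i.e. `μ = 0`; as `q ≤ p`, the kernel of
`Bᵀ` is nontrivial too, and `(x', 0, …, 0)` with `Bᵀ x' = 0` lies in the kernel of `C`. -/

open Matrix

/-- The matrix `C` of Construction III: indexed by `Fin p ⊕ (Fin n × Fin q)`,
first block row `[0, B, …, B]`, and the `n×n` grid of `q×q` blocks has zero diagonal blocks
and identity blocks `I_q` off the diagonal. -/
def matC3 (p q n : ℕ) (B : Matrix (Fin p) (Fin q) ℝ) :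
    Matrix (Fin p ⊕ Fin n × Fin q) (Fin p ⊕ Fin n × Fin q) ℝ :=
  Matrix.of fun a b =>
    match a, b with
    | Sum.inl i, Sum.inr (_, j) => B i j
    | Sum.inr (_, j), Sum.inl i => B i j
    | Sum.inr (k, j), Sum.inr (k', j') => if k ≠ k' ∧ j = j' then 1 else 0
    | _, _ => 0

/-- The matrix `D` of Construction III: indexed by `Fin q ⊕ (Fin n × Fin p)`,
first block row `[0, Bᵀ, …, Bᵀ]`, and the `n×n` grid of `p×p` blocks has zero diagonal blocks
and identity blocks `I_p` off the diagonal. -/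
def matD3 (p q n : ℕ) (B : Matrix (Fin p) (Fin q) ℝ) :
    Matrix (Fin q ⊕ Fin n × Fin p) (Fin q ⊕ Fin n × Fin p) ℝ :=
  Matrix.of fun a b =>
    match a, b with
    | Sum.inl j, Sum.inr (_, i) => B i j
    | Sum.inr (_, i), Sum.inl j => B i j
    | Sum.inr (k, i), Sum.inr (k', i') => if k ≠ k' ∧ i = i' then 1 else 0
    | _, _ => 0

def repeatedVec {α β M : Type*} (κ : Type*) (x : α → M) (y : β → M) : α ⊕ κ × β → M :=
  Sum.elim x fun kj => y kj.2

section repeatedVec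

variable {α β κ M R : Type*}

@[simp]
lemma repeatedVec_zero [Zero M] : repeatedVec κ (0 : α → M) (0 : β → M) = 0 := by
  ext (i | ⟨k, j⟩) <;> rfl

lemma smul_repeatedVec [SMul R M] (c : R) (x : α → M) (y : β → M) :
    c • repeatedVec κ x y = repeatedVec κ (c • x) (c • y) := by
  ext (i | ⟨k, j⟩) <;> rfl

lemma repeatedVec_inj [Nonempty κ] {x x' : α → M} {y y' : β → M} :
    repeatedVec κ x y = repeatedVec κ x' y' ↔ x = x' ∧ y = y' := by
  refine ⟨fun h => ⟨funext fun i => congrFun h (.inl i), funext fun j => ?_⟩,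
    fun ⟨hx, hy⟩ => hx ▸ hy ▸ rfl⟩
  exact congrFun h (.inr (Classical.arbitrary κ, j))

lemma repeatedVec_eq_zero_iff [Nonempty κ] [Zero M] {x : α → M} {y : β → M} :
    repeatedVec κ x y = 0 ↔ x = 0 ∧ y = 0 := by
  rw [← repeatedVec_zero, repeatedVec_inj]

end repeatedVec

lemma Matrix.rank_lt_card_width_iff {K m n : Type*} [Field K] [Fintype m] [Fintype n]
    (A : Matrix m n K) : A.rank < Fintype.card n ↔ ∃ v ≠ 0, A *ᵥ v = 0 := by
  have hrank := LinearMap.finrank_range_add_finrank_ker A.mulVecLin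
  rw [Module.finrank_fintype_fun_eq_card] at hrank
  change A.rank + _ = _ at hrank
  rw [← hrank, lt_add_iff_pos_right, Module.finrank_pos_iff, Submodule.nontrivial_iff_ne_bot,
    Submodule.ne_bot_iff]
  simp only [LinearMap.mem_ker, mulVecLin_apply, and_comm]

lemma Matrix.exists_transpose_mulVec_eq_zero {K m n : Type*} [Field K] [Fintype m] [Fintype n]
    (hcard : Fintype.card n ≤ Fintype.card m) (B : Matrix m n K) {y : n → K} (hy : y ≠ 0)
    (hBy : B *ᵥ y = 0) : ∃ x ≠ 0, Bᵀ *ᵥ x = 0 := by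
  rw [← rank_lt_card_width_iff, rank_transpose]
  exact ((rank_lt_card_width_iff B).2 ⟨y, hy, hBy⟩).trans_le hcard

lemma matC3_mulVec_repeatedVec (p q n : ℕ) (B : Matrix (Fin p) (Fin q) ℝ) (x : Fin p → ℝ)
    (y : Fin q → ℝ) :
    matC3 p q n B *ᵥ repeatedVec (Fin n) x y =
      repeatedVec (Fin n) ((n : ℝ) • (B *ᵥ y)) (Bᵀ *ᵥ x + ((n : ℝ) - 1) • y) := by
  ext (i | ⟨k, j⟩)
  · simp [matC3, repeatedVec, mulVec, dotProduct, Fintype.sum_sum_type, Fintype.sum_prod_type]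
  · simp only [mulVec, dotProduct, matC3, ne_eq, of_apply, repeatedVec, Fintype.sum_sum_type,
      Sum.elim_inl, Sum.elim_inr, ite_mul, one_mul, zero_mul, Fintype.sum_prod_type, Pi.add_apply,
      transpose_apply, Pi.smul_apply, smul_eq_mul, add_right_inj]
    simp [ite_and, Finset.sum_ite_irrel, Finset.sum_ite, Finset.filter_ne, Nat.cast_pred k.pos]

theorem matC3_eigenvalue_reflection_general (p q n : ℕ) (hpq : q ≤ p) (hn : 1 ≤ n)
    (B : Matrix (Fin p) (Fin q) ℝ) (x : Fin p → ℝ) (y : Fin q → ℝ) (l : ℝ) (hl : l ≠ 0)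
    (hxy : ¬(x = 0 ∧ y = 0))
    (hev : matC3 p q n B *ᵥ Sum.elim x (fun kj => y kj.2) =
      l • Sum.elim x (fun kj => y kj.2)) :
    ∃ u : Fin p ⊕ Fin n × Fin q → ℝ, u ≠ 0 ∧
      matC3 p q n B *ᵥ u = ((n : ℝ) - 1 - l) • u := by
  have : Nonempty (Fin n) := ⟨⟨0, hn⟩⟩
  change matC3 p q n B *ᵥ repeatedVec (Fin n) x y = l • repeatedVec (Fin n) x y at hev
  rw [matC3_mulVec_repeatedVec, smul_repeatedVec, repeatedVec_inj] at hev
  obtain ⟨hBy, hBx⟩ := hev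
  by_cases hx : x = 0
  · subst hx
    have hy : y ≠ 0 := fun hy => hxy ⟨rfl, hy⟩
    have hBy0 : B *ᵥ y = 0 := by
      rwa [smul_zero, smul_eq_zero_iff_right (Nat.cast_ne_zero.2 (by omega))] at hBy
    have hμ : (n : ℝ) - 1 - l = 0 := by
      rw [mulVec_zero, zero_add] at hBx
      rw [smul_left_injective ℝ hy hBx, sub_self]
    obtain ⟨x', hx', hBx'⟩ := exists_transpose_mulVec_eq_zero (by simpa using hpq) B hy hBy0
    refine ⟨repeatedVec (Fin n) x' 0, by simp [repeatedVec_eq_zero_iff, hx'], ?_⟩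
    rw [hμ, zero_smul, matC3_mulVec_repeatedVec, hBx', mulVec_zero]
    simp
  · refine ⟨repeatedVec (Fin n) (l • x) (((n : ℝ) - 1 - l) • y), ?_, ?_⟩
    · simp [repeatedVec_eq_zero_iff, hl, hx]
    · rw [matC3_mulVec_repeatedVec, smul_repeatedVec, repeatedVec_inj, mulVec_smul, mulVec_smul,
        smul_comm, hBy, smul_comm]
      refine ⟨rfl, ?_⟩
      linear_combination (norm := module) l • hBx

/-- If `(x, y, …, y)` (not zero) is an eigenvector of `C` with eigenvalue `λ ≠ 0`, then
`n − 1 − λ` is also an eigenvalue of `C`. -/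
theorem matC3_eigenvalue_reflection (p q n : ℕ) (hq : 1 ≤ q) (hpq : q ≤ p) (hn : 1 ≤ n)
    (B : Matrix (Fin p) (Fin q) ℝ) (x : Fin p → ℝ) (y : Fin q → ℝ) (l : ℝ) (hl : l ≠ 0)
    (hxy : ¬(x = 0 ∧ y = 0))
    (hev : matC3 p q n B *ᵥ Sum.elim x (fun kj => y kj.2) =
      l • Sum.elim x (fun kj => y kj.2)) :
    ∃ u : Fin p ⊕ Fin n × Fin q → ℝ, u ≠ 0 ∧
      matC3 p q n B *ᵥ u = ((n : ℝ) - 1 - l) • u :=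
  matC3_eigenvalue_reflection_general p q n hpq hn B x y l hl hxy hev
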